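/- The exponential tilt of q with reward r(y) = log(q(y)/π(y)) and parameter α ≥ 0 increases KL divergence from π: KL(p_α‖π) ≥ KL(q‖π), where p_α(y) ∝ q(y)·(q(y)/π(y))^α. -/

import Mathlib

/-!
Write `r = log (q / π)`, so that `p_α ∝ q · exp (α r)`. Since
`log (p_α / π) = log (p_α / q) + r`, we get `KL(p_α‖π) = KL(p_α‖q) + 𝔼_{p_α} r ≥ 𝔼_{p_α} r`.
Tilting by the increasing function `exp (α r)` of `r` can only raise the mean of `r`
(Chebyshev's sum inequality for the weights `q`), so `𝔼_{p_α} r ≥ 𝔼_q r = KL(q‖π)`.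
-/

open Finset Real

lemma sub_le_mul_log_div {a b : ℝ} (ha : 0 < a) (hb : 0 < b) : a - b ≤ a * log (a / b) := by
  have h := one_sub_inv_le_log_of_pos (div_pos ha hb)
  rw [inv_div] at h
  calc a - b = a * (1 - b / a) := by field_simp
    _ ≤ a * log (a / b) := mul_le_mul_of_nonneg_left h ha.le

/-- Gibbs' inequality for positive weights of arbitrary total mass. -/
lemma sum_sub_sum_le_sum_mul_log_div {ι : Type*} [Fintype ι] {a b : ι → ℝ}
    (ha : ∀ i, 0 < a i) (hb : ∀ i, 0 < b i) :
    ∑ i, a i - ∑ i, b i ≤ ∑ i, a i * log (a i / b i) := by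
  rw [← sum_sub_distrib]
  exact sum_le_sum fun i _ => sub_le_mul_log_div (ha i) (hb i)

lemma sum_mul_sub_mul_sub_eq {ι : Type*} [Fintype ι] (w f g : ι → ℝ) :
    ∑ i, ∑ j, w i * w j * ((f i - f j) * (g i - g j)) =
      2 * ((∑ i, w i) * ∑ i, w i * (f i * g i) - (∑ i, w i * f i) * ∑ i, w i * g i) := by
  have h : ∀ i j, w i * w j * ((f i - f j) * (g i - g j)) =
      w i * (f i * g i) * w j + w i * (w j * (f j * g j)) - w i * f i * (w j * g j)
        - w i * g i * (w j * f j) := fun i j => by ring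
  simp only [h, sum_add_distrib, sum_sub_distrib, ← mul_sum, ← sum_mul]
  ring

/-- Weighted Chebyshev sum inequality. -/
lemma Monovary.sum_mul_sum_le_sum_mul_sum_mul {ι : Type*} [Fintype ι] {w f g : ι → ℝ}
    (hw : ∀ i, 0 ≤ w i) (hfg : Monovary f g) :
    (∑ i, w i * f i) * ∑ i, w i * g i ≤ (∑ i, w i) * ∑ i, w i * (f i * g i) := by
  have h : 0 ≤ ∑ i, ∑ j, w i * w j * ((f i - f j) * (g i - g j)) :=
    sum_nonneg fun i _ => sum_nonneg fun j _ =>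
      mul_nonneg (mul_nonneg (hw i) (hw j)) (hfg.sub_mul_sub_nonneg j i)
  rw [sum_mul_sub_mul_sub_eq] at h
  linarith

lemma monovary_rpow_log {ι : Type*} {r : ι → ℝ} (hr : ∀ i, 0 < r i) {α : ℝ} (hα : 0 ≤ α) :
    Monovary (fun i => r i ^ α) (fun i => log (r i)) := fun i j hij =>
  rpow_le_rpow (hr i).le ((log_lt_log_iff (hr i) (hr j)).mp hij).le hα

lemma sum_mul_le_sum_div_mul_of_monovary {ι : Type*} [Fintype ι] {w f g : ι → ℝ}
    (hw : ∀ i, 0 ≤ w i) (hwsum : ∑ i, w i = 1) (hgf : Monovary g f)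
    (hZ : 0 < ∑ i, w i * g i) :
    ∑ i, w i * f i ≤ ∑ i, w i * g i / (∑ j, w j * g j) * f i := by
  have h := Monovary.sum_mul_sum_le_sum_mul_sum_mul hw hgf.symm
  simp only [div_mul_eq_mul_div, ← sum_div, le_div_iff₀ hZ]
  simpa only [hwsum, one_mul, mul_comm (g _) (f _), mul_assoc] using h

theorem stmt12_general {Y : Type*} [Fintype Y]
    (q pi : Y → ℝ) (α : ℝ) (hα : 0 ≤ α)
    (hq : ∀ y, 0 < q y) (hqsum : ∑ y, q y = 1)
    (hpi : ∀ y, 0 < pi y)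
    (Z : ℝ) (hZ : Z = ∑ y, q y * (q y / pi y) ^ α)
    (pα : Y → ℝ) (hpα : ∀ y, pα y = q y * (q y / pi y) ^ α / Z) :
    ∑ y, q y * Real.log (q y / pi y) ≤ ∑ y, pα y * Real.log (pα y / pi y) := by
  have hr : ∀ y, 0 < q y / pi y := fun y => div_pos (hq y) (hpi y)
  have hne : (univ : Finset Y).Nonempty := nonempty_of_sum_ne_zero (hqsum ▸ one_ne_zero)
  have hZpos : 0 < Z := hZ ▸ sum_pos (fun y _ => mul_pos (hq y) (rpow_pos_of_pos (hr y) α)) hne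
  have hp : ∀ y, 0 < pα y := fun y =>
    hpα y ▸ div_pos (mul_pos (hq y) (rpow_pos_of_pos (hr y) α)) hZpos
  have hpsum : ∑ y, pα y = 1 := by
    simp only [hpα, ← sum_div, ← hZ, div_self hZpos.ne']
  have hmean : ∑ y, q y * log (q y / pi y) ≤ ∑ y, pα y * log (q y / pi y) := by
    simp only [hpα, hZ]
    exact sum_mul_le_sum_div_mul_of_monovary (fun y => (hq y).le) hqsum
      (monovary_rpow_log hr hα) (hZ ▸ hZpos)
  have hsplit : ∑ y, pα y * log (pα y / pi y) =
      ∑ y, pα y * log (pα y / q y) + ∑ y, pα y * log (q y / pi y) := by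
    rw [← sum_add_distrib]
    refine sum_congr rfl fun y _ => ?_
    rw [← mul_add, ← log_mul (div_pos (hp y) (hq y)).ne' (hr y).ne',
      div_mul_div_cancel₀ (hq y).ne']
  have hgibbs := sum_sub_sum_le_sum_mul_log_div hp hq
  rw [hpsum, hqsum, sub_self] at hgibbs
  linarith

theorem stmt12 {Y : Type*} [Fintype Y]
    (q pi : Y → ℝ) (α : ℝ) (hα : 0 ≤ α)
    (hq : ∀ y, 0 < q y) (hqsum : ∑ y, q y = 1)
    (hpi : ∀ y, 0 < pi y) (hpisum : ∑ y, pi y = 1)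
    (Z : ℝ) (hZ : Z = ∑ y, q y * (q y / pi y) ^ α)
    (pα : Y → ℝ) (hpα : ∀ y, pα y = q y * (q y / pi y) ^ α / Z) :
    ∑ y, q y * Real.log (q y / pi y) ≤ ∑ y, pα y * Real.log (pα y / pi y) :=
  stmt12_general q pi α hα hq hqsum hpi Z hZ pα hpα
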